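/- Let C be a balanced (strict) monoidal category with braiding c and twist θ. Let U ∈ C be an object with a left dual U* via unit b_U: 1 → U ⊗ U* and counit d_U: U* ⊗ U → 1 satisfying the ribbon compatibility (U ⊗ θ_{U*}) ∘ b_U = (θ_U ⊗ U*) ∘ b_U. Define b'_U = (U* ⊗ θ_U) ∘ c_{U,U*} ∘ b_U : 1 → U* ⊗ U and d'_U = d_U ∘ c_{U,U*} ∘ (θ_U ⊗ U*) : U ⊗ U* → 1. Then (b'_U, d'_U) exhibits U as a left dual of U*, i.e. (d'_U ⊗ U) ∘ (U ⊗ b'_U) = id_U and (U* ⊗ d'_U) ∘ (b'_U ⊗ U*) = id_{U*}. -/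

import Mathlib

/-!
The pair `(b', d')` is the swapped pairing `(b ≫ c⁻¹_{U*,U}, c_{U,U*} ≫ d)` of `U*` and `U`
transported along the automorphism `θ_U` of `U`. For `d'` this holds on the nose; for `b'` it
amounts to `b ≫ (θ_U² ⊗ U*) ≫ c_{U*,U} ∘ c_{U,U*} = b`, which follows from the ribbon
compatibility, the balancing axiom for `θ_{U ⊗ U*}`, naturality of `θ` along `b`, and `θ_𝟙 = 𝟙`.
-/

open CategoryTheory MonoidalCategory

namespace CategoryTheory

variable {C : Type*} [Category C] [MonoidalCategory C]

abbrev ExactPairing.ofTriangles {X Y : C} (η : 𝟙_ C ⟶ X ⊗ Y) (ε : Y ⊗ X ⟶ 𝟙_ C)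
    (h₁ : (λ_ X).inv ≫ η ▷ X ≫ (α_ X Y X).hom ≫ X ◁ ε ≫ (ρ_ X).hom = 𝟙 X)
    (h₂ : (ρ_ Y).inv ≫ Y ◁ η ≫ (α_ Y X Y).inv ≫ ε ▷ Y ≫ (λ_ Y).hom = 𝟙 Y) :
    ExactPairing X Y where
  coevaluation' := η
  evaluation' := ε
  coevaluation_evaluation' := by
    rw [← cancel_epi (ρ_ Y).inv, ← cancel_mono (λ_ Y).hom]
    simpa using h₂
  evaluation_coevaluation' := by
    rw [← cancel_epi (λ_ X).inv, ← cancel_mono (ρ_ X).hom]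
    simpa using h₁

section Twist

variable [BraidedCategory C] {θ : ∀ X : C, X ⟶ X}

theorem twist_tensorUnit (θnat : ∀ {X Y : C} (f : X ⟶ Y), f ≫ θ Y = θ X ≫ f)
    (θbal : ∀ X Y : C, θ (X ⊗ Y) = (θ X ⊗ₘ θ Y) ≫ (β_ X Y).hom ≫ (β_ Y X).hom)
    [IsIso (θ (𝟙_ C))] : θ (𝟙_ C) = 𝟙 (𝟙_ C) := by
  -- `c_{𝟙,𝟙}` is trivial, so `θ_{𝟙 ⊗ 𝟙} = θ_𝟙 ⊗ θ_𝟙`; transported along `λ_𝟙` this makes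
  -- `θ_𝟙` idempotent, hence the identity since it is invertible.
  have hnat := θnat (λ_ (𝟙_ C)).hom
  simp only [θbal, braiding_tensorUnit_right, ← unitors_equal, Iso.hom_inv_id,
    Category.comp_id] at hnat
  have hidem : θ (𝟙_ C) ≫ θ (𝟙_ C) = θ (𝟙_ C) ≫ 𝟙 _ := by
    rw [← cancel_epi (λ_ (𝟙_ C)).hom, Category.comp_id, hnat, MonoidalCategory.tensorHom_def,
      Category.assoc, leftUnitor_naturality, unitors_equal, rightUnitor_naturality_assoc]
  exact (cancel_epi _).1 hidem

theorem comp_twist_sq_whiskerRight_braiding_sq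
    (θnat : ∀ {X Y : C} (f : X ⟶ Y), f ≫ θ Y = θ X ≫ f)
    (θbal : ∀ X Y : C, θ (X ⊗ Y) = (θ X ⊗ₘ θ Y) ≫ (β_ X Y).hom ≫ (β_ Y X).hom)
    [IsIso (θ (𝟙_ C))] {X Y : C} (b : 𝟙_ C ⟶ X ⊗ Y) (hb : b ≫ X ◁ θ Y = b ≫ θ X ▷ Y) :
    b ≫ (θ X ≫ θ X) ▷ Y ≫ (β_ X Y).hom ≫ (β_ Y X).hom = b :=
  calc b ≫ (θ X ≫ θ X) ▷ Y ≫ (β_ X Y).hom ≫ (β_ Y X).hom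
      = b ≫ (θ X ⊗ₘ θ Y) ≫ (β_ X Y).hom ≫ (β_ Y X).hom := by
        rw [comp_whiskerRight, Category.assoc, ← Category.assoc b, ← hb, tensorHom_def']
        simp only [Category.assoc]
    _ = θ (𝟙_ C) ≫ b := by rw [← θbal, θnat]
    _ = b := by rw [twist_tensorUnit θnat θbal, Category.id_comp]

theorem comp_braiding_whiskerLeft_twist
    (θnat : ∀ {X Y : C} (f : X ⟶ Y), f ≫ θ Y = θ X ≫ f)
    (θbal : ∀ X Y : C, θ (X ⊗ Y) = (θ X ⊗ₘ θ Y) ≫ (β_ X Y).hom ≫ (β_ Y X).hom)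
    [IsIso (θ (𝟙_ C))] {X Y : C} [IsIso (θ X)] (b : 𝟙_ C ⟶ X ⊗ Y)
    (hb : b ≫ X ◁ θ Y = b ≫ θ X ▷ Y) :
    b ≫ (β_ X Y).hom ≫ Y ◁ θ X = (b ≫ (β_ Y X).inv) ≫ Y ◁ inv (θ X) := by
  rw [← cancel_mono (Y ◁ θ X), ← cancel_mono (β_ Y X).hom]
  simp only [Category.assoc, ← whiskerLeft_comp, IsIso.inv_hom_id, whiskerLeft_id,
    Category.comp_id, Iso.inv_hom_id]
  rw [← BraidedCategory.braiding_naturality_left_assoc]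
  exact comp_twist_sq_whiskerRight_braiding_sq θnat θbal b hb

end Twist

end CategoryTheory

theorem reversed_duality {C : Type*} [Category C] [MonoidalCategory C]
    [BraidedCategory C]
    (θ : ∀ X : C, X ⟶ X)
    (θiso : ∀ X : C, IsIso (θ X))
    (θnat : ∀ {X Y : C} (f : X ⟶ Y), f ≫ θ Y = θ X ≫ f)
    (θbal : ∀ X Y : C, θ (X ⊗ Y) = (θ X ⊗ₘ θ Y) ≫ (β_ X Y).hom ≫ (β_ Y X).hom)
    (U Ustar : C) (b : 𝟙_ C ⟶ U ⊗ Ustar) (d : Ustar ⊗ U ⟶ 𝟙_ C)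
    (tri₁ : (λ_ U).inv ≫ (b ▷ U) ≫ (α_ U Ustar U).hom ≫ (U ◁ d) ≫ (ρ_ U).hom = 𝟙 U)
    (tri₂ : (ρ_ Ustar).inv ≫ (Ustar ◁ b) ≫ (α_ Ustar U Ustar).inv ≫ (d ▷ Ustar) ≫
      (λ_ Ustar).hom = 𝟙 Ustar)
    (ribbon : b ≫ (U ◁ θ Ustar) = b ≫ (θ U ▷ Ustar)) :
    let b' : 𝟙_ C ⟶ Ustar ⊗ U := b ≫ (β_ U Ustar).hom ≫ (Ustar ◁ θ U)
    let d' : U ⊗ Ustar ⟶ 𝟙_ C := (θ U ▷ Ustar) ≫ (β_ U Ustar).hom ≫ d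
    -- `(b', d')` exhibits `U` as a left dual of `U*`:
    ((λ_ Ustar).inv ≫ (b' ▷ Ustar) ≫ (α_ Ustar U Ustar).hom ≫ (Ustar ◁ d') ≫
        (ρ_ Ustar).hom = 𝟙 Ustar) ∧
    ((ρ_ U).inv ≫ (U ◁ b') ≫ (α_ U Ustar U).inv ≫ (d' ▷ U) ≫ (λ_ U).hom = 𝟙 U) := by
  intro b' d'
  have := θiso (𝟙_ C)
  have := θiso U
  let : ExactPairing U Ustar := .ofTriangles b d tri₁ tri₂
  let := BraidedCategory.exactPairing_swap U Ustar
  let : ExactPairing Ustar U := exactPairingCongrRight (asIso (θ U))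
  have hb' : b' = η_ Ustar U := comp_braiding_whiskerLeft_twist θnat θbal b ribbon
  have hd' : d' = ε_ Ustar U := rfl
  rw [hb', hd']
  exact ⟨by simp, by simp⟩
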